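/- arXiv:math/0311073 — 4 statements merged into one kernel-verified Lean document; each statement's English description precedes it below -/
import Mathlib

section
/- Let Z be a finite set with |Z| = 21 and let C ⊆ Pow(Z) be an F₂-linear code (under symmetric difference) such that every word A ∈ C has |A| ∈ {0,5,8,9,12,13,16,21}. If A₁, A₂ ∈ C are distinct words with |A₁| = |A₂| = 5, then |A₁ ∩ A₂| = 1. -/
theorem stmt12 {Z : Type*} [Fintype Z] [DecidableEq Z] (hZ : Fintype.card Z = 21)
    (C : Set (Finset Z)) (hC0 : (∅ : Finset Z) ∈ C)
    (hCadd : ∀ A ∈ C, ∀ B ∈ C, symmDiff A B ∈ C)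
    (hwt : ∀ A ∈ C, A.card ∈ ({0, 5, 8, 9, 12, 13, 16, 21} : Set ℕ))
    (A₁ A₂ : Finset Z) (h₁ : A₁ ∈ C) (h₂ : A₂ ∈ C) (hne : A₁ ≠ A₂)
    (hc₁ : A₁.card = 5) (hc₂ : A₂.card = 5) :
    (A₁ ∩ A₂).card = 1 := by
  have hsd := hwt _ (hCadd A₁ h₁ A₂ h₂)
  have hcard : (symmDiff A₁ A₂).card + 2 * (A₁ ∩ A₂).card = 10 := by
    have hd : symmDiff A₁ A₂ = (A₁ \ A₂) ∪ (A₂ \ A₁) := by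
      rw [symmDiff_def]; rfl
    have h1 : (A₁ \ A₂).card + (A₁ ∩ A₂).card = A₁.card :=
      Finset.card_sdiff_add_card_inter A₁ A₂
    have h2 : (A₂ \ A₁).card + (A₂ ∩ A₁).card = A₂.card :=
      Finset.card_sdiff_add_card_inter A₂ A₁
    rw [Finset.inter_comm] at h2
    rw [hd, Finset.card_union_of_disjoint (disjoint_sdiff_sdiff)]
    omega
  have hle : (A₁ ∩ A₂).card ≤ 5 := hc₁ ▸ Finset.card_le_card Finset.inter_subset_left
  have hne0 : (symmDiff A₁ A₂).card ≠ 0 := by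
    intro h
    exact hne (by simpa [symmDiff_eq_bot] using Finset.card_eq_zero.mp h)
  simp only [Set.mem_insert_iff, Set.mem_singleton_iff] at hsd
  omega
end

section
/- Let k be a field of characteristic 2 and let G = X₀⁴X₁X₂ + X₀X₁⁴X₂ + X₀X₁X₂⁴ ∈ k[X₀,X₁,X₂] (the Dolgachev–Kondo polynomial X₀X₁X₂(X₀³+X₁³+X₂³)). Then for a, b ∈ k, the three partial derivatives ∂G/∂X₀, ∂G/∂X₁, ∂G/∂X₂ all vanish at the point (a, b, 1) if and only if a⁴ = a and b⁴ = b. -/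
open MvPolynomial

/-- The Dolgachev–Kondo polynomial `X₀X₁X₂(X₀³ + X₁³ + X₂³)`. -/
noncomputable def DKpoly (k : Type*) [CommRing k] : MvPolynomial (Fin 3) k :=
  X 0 ^ 4 * X 1 * X 2 + X 0 * X 1 ^ 4 * X 2 + X 0 * X 1 * X 2 ^ 4

theorem stmt17 (k : Type*) [Field k] [CharP k 2] (a b : k) :
    (eval ![a, b, 1] (pderiv 0 (DKpoly k)) = 0 ∧
     eval ![a, b, 1] (pderiv 1 (DKpoly k)) = 0 ∧
     eval ![a, b, 1] (pderiv 2 (DKpoly k)) = 0) ↔ (a ^ 4 = a ∧ b ^ 4 = b) := by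
  have h4 : (4:k) = 0 := by
    have h2 : (2:k) = 0 := by exact_mod_cast CharP.cast_eq_zero k 2
    rw [show (4:k)=2*2 by norm_num, h2]; ring
  have key : ∀ x y : k, x + y = 0 ↔ x = y := fun x y => by
    rw [← CharTwo.sub_eq_add, sub_eq_zero]
  simp only [DKpoly, map_add, pderiv_mul, pderiv_pow, pderiv_X, map_mul, map_pow,
    eval_X, eval_mul, eval_add, eval_pow, map_ofNat, eval_C, Pi.single_apply,
    Matrix.cons_val_zero, Matrix.cons_val_one, Matrix.head_cons, Matrix.cons_val_two,
    Matrix.tail_cons]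
  norm_num [Fin.ext_iff]
  rw [h4]
  ring_nf
  rw [key, key, key]
  constructor
  · rintro ⟨h1, h2, -⟩; exact ⟨h2.symm, h1.symm⟩
  · rintro ⟨h1, h2⟩; exact ⟨h2.symm, h1.symm, by rw [h1, h2]⟩
end

section
/- Let Z be a finite set and let L be a subgroup of the ℚ-vector space with basis {e_P : P ∈ Z} ∪ {h} (bilinear form: e_P² = −2, h² = 2, all distinct basis vectors orthogonal) such that L contains all e_P and h, every element of L is of the form (1/2)(Σ_{P∈Z} a_P e_P + b h) with all a_P, b ∈ ℤ, and for every element of L the set A = {P : a_P odd} satisfies |A| ∉ {1, 4} whenever (a_P mod 2, b mod 2) ≢ 0. Then every r ∈ L with r·h = 0 and r·r = −2 equals e_P or −e_P for some P ∈ Z. -/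
/-- The symmetric bilinear form on the ℚ-vector space with coordinates indexed by
`Option Z` (`none` corresponding to `h`), determined by `e_P·e_P = -2`,
`e_P·e_Q = 0` for `P ≠ Q`, `e_P·h = 0` and `h·h = 2`. -/
def bform {Z : Type*} [Fintype Z] (v w : Option Z → ℚ) : ℚ :=
  2 * v none * w none - 2 * ∑ P, v (some P) * w (some P)

/-- The basis vector `e_P`. -/
def eVec {Z : Type*} [DecidableEq Z] (P : Z) : Option Z → ℚ := fun x =>
  match x with
  | none => 0
  | some Q => if Q = P then 1 else 0

/-- The basis vector `h`. -/
def hVec {Z : Type*} : Option Z → ℚ := fun x =>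
  match x with
  | none => 1
  | some _ => 0

theorem stmt18 {Z : Type*} [Fintype Z] [DecidableEq Z]
    (L : AddSubgroup (Option Z → ℚ))
    (he : ∀ P : Z, eVec P ∈ L) (hh : hVec (Z := Z) ∈ L)
    (hhalf : ∀ v ∈ L, ∀ x : Option Z, ∃ m : ℤ, 2 * v x = (m : ℚ))
    (hwt : ∀ v ∈ L, ¬ (∀ x : Option Z, ∃ m : ℤ, v x = (m : ℚ)) →
      Set.ncard {P : Z | ¬ ∃ m : ℤ, v (some P) = (m : ℚ)} ∉ ({1, 4} : Set ℕ))
    (r : Option Z → ℚ) (hr : r ∈ L)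
    (hrh : bform r hVec = 0) (hrr : bform r r = -2) :
    ∃ P : Z, r = eVec P ∨ r = -eVec P := by
  classical
  have h0 : r none = 0 := by
    have h := hrh
    simp [bform, hVec] at h
    linarith
  have hsum : ∑ P, r (some P) * r (some P) = 1 := by
    have h := hrr
    simp [bform, h0] at h
    linarith
  choose m hm using fun P => hhalf r hr (some P)
  have hmsum : ∑ P, (m P) ^ 2 = 4 := by
    have h : ((∑ P, (m P) ^ 2 : ℤ) : ℚ) = 4 := by
      push_cast
      calc (∑ P, (m P : ℚ) ^ 2) = ∑ P, (2 * r (some P)) ^ 2 := by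
            exact Finset.sum_congr rfl fun P _ => by rw [hm P]
        _ = 4 * ∑ P, r (some P) * r (some P) := by
            rw [Finset.mul_sum]; exact Finset.sum_congr rfl fun P _ => by ring
        _ = 4 := by rw [hsum]; ring
    exact_mod_cast h
  by_cases hall : ∀ P, Even (m P)
  · -- integral case
    have hn : ∀ P, ∃ n : ℤ, r (some P) = (n : ℚ) ∧ m P = 2 * n := by
      intro P
      obtain ⟨k, hk⟩ := hall P
      refine ⟨k, ?_, by omega⟩
      have h2 : (2 : ℚ) * r (some P) = 2 * k := by
        rw [hm P, hk]; push_cast; ring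
      linarith
    choose n hn1 hn2 using hn
    have hnsum : ∑ P, (n P) ^ 2 = 1 := by
      have : ∑ P, (m P) ^ 2 = 4 * ∑ P, (n P) ^ 2 := by
        rw [Finset.mul_sum]; exact Finset.sum_congr rfl fun P _ => by rw [hn2 P]; ring
      omega
    have hex : ∃ P, n P ≠ 0 := by
      by_contra hc
      push_neg at hc
      rw [Finset.sum_eq_zero (fun P _ => by rw [hc P]; ring)] at hnsum
      omega
    obtain ⟨P, hP⟩ := hex
    have hsplit : ∑ Q ∈ Finset.univ.erase P, (n Q) ^ 2 + (n P) ^ 2 = 1 := by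
      rw [← hnsum]
      exact Finset.sum_erase_add Finset.univ (fun Q => (n Q) ^ 2) (Finset.mem_univ P)
    have h1le : 1 ≤ (n P) ^ 2 := by
      have := Int.one_le_abs hP
      nlinarith [sq_abs (n P)]
    have herase0 : ∀ Q ∈ Finset.univ.erase P, (n Q) ^ 2 = 0 := by
      have hnn : 0 ≤ ∑ Q ∈ Finset.univ.erase P, (n Q) ^ 2 :=
        Finset.sum_nonneg fun Q _ => sq_nonneg _
      have : ∑ Q ∈ Finset.univ.erase P, (n Q) ^ 2 = 0 := by linarith
      exact (Finset.sum_eq_zero_iff_of_nonneg fun Q _ => sq_nonneg _).mp this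
    have hothers : ∀ Q, Q ≠ P → n Q = 0 := by
      intro Q hQ
      have := herase0 Q (Finset.mem_erase.mpr ⟨hQ, Finset.mem_univ Q⟩)
      nlinarith
    have hnP : n P = 1 ∨ n P = -1 := by
      have hz : ∑ Q ∈ Finset.univ.erase P, (n Q) ^ 2 = 0 := Finset.sum_eq_zero herase0
      have h2 : (n P) ^ 2 = 1 := by linarith
      have h3 : (n P - 1) * (n P + 1) = 0 := by nlinarith
      rcases mul_eq_zero.mp h3 with h | h
      · left; omega
      · right; omega
    refine ⟨P, ?_⟩
    rcases hnP with h | h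
    · left
      funext x
      rcases x with _ | Q
      · simpa [eVec] using h0
      · rw [hn1 Q]
        by_cases hQ : Q = P
        · simp [eVec, hQ, h]
        · simp [eVec, hQ, hothers Q hQ]
    · right
      funext x
      rcases x with _ | Q
      · simpa [eVec] using h0
      · rw [hn1 Q]
        by_cases hQ : Q = P
        · simp [eVec, hQ, h]
        · simp [eVec, hQ, hothers Q hQ]
  · -- half-integral case : contradiction
    push_neg at hall
    obtain ⟨P₀, hP₀⟩ := hall
    exfalso
    set A : Finset Z := Finset.univ.filter (fun P => ¬ Even (m P)) with hA
    have hmemA : ∀ P, P ∈ A ↔ ¬ Even (m P) := by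
      intro P; simp [hA]
    -- each odd square is at least 1
    have hge1 : ∀ P ∈ A, 1 ≤ (m P) ^ 2 := by
      intro P hPA
      have hne : m P ≠ 0 := by
        intro h; exact ((hmemA P).mp hPA) (by rw [h]; exact Even.zero)
      have := Int.one_le_abs hne
      nlinarith [sq_abs (m P)]
    have hcard_le : (A.card : ℤ) ≤ 4 := by
      have h1 : (A.card : ℤ) * 1 ≤ ∑ P ∈ A, (m P) ^ 2 := by
        calc (A.card : ℤ) * 1 = ∑ _P ∈ A, 1 := by simp
          _ ≤ ∑ P ∈ A, (m P) ^ 2 := Finset.sum_le_sum hge1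
      have h2 : ∑ P ∈ A, (m P) ^ 2 ≤ ∑ P, (m P) ^ 2 :=
        Finset.sum_le_sum_of_subset_of_nonneg (Finset.subset_univ A)
          (fun P _ _ => sq_nonneg _)
      omega
    -- mod 4 : sum of squares ≡ card A
    have hmod : ∀ P, (m P) ^ 2 % 4 = if P ∈ A then 1 else 0 := by
      intro P
      by_cases hPA : P ∈ A
      · have hodd : ¬ Even (m P) := (hmemA P).mp hPA
        obtain ⟨k, hk⟩ := Int.not_even_iff_odd.mp hodd
        have : (m P) ^ 2 = 4 * (k * k + k) + 1 := by rw [hk]; ring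
        simp [hPA]; omega
      · have heven : Even (m P) := not_not.mp (fun h => hPA ((hmemA P).mpr h))
        obtain ⟨k, hk⟩ := heven
        have : (m P) ^ 2 = 4 * (k * k) := by rw [hk]; ring
        simp [hPA]; omega
    have hcardmod : (A.card : ℤ) % 4 = 0 := by
      have h1 : (∑ P, (m P) ^ 2) % 4 = (∑ P : Z, (m P) ^ 2 % 4) % 4 :=
        Finset.sum_int_mod _ _ _
      have h2 : (∑ P : Z, (m P) ^ 2 % 4) = ∑ P : Z, (if P ∈ A then (1:ℤ) else 0) :=
        Finset.sum_congr rfl fun P _ => hmod P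
      have h3 : (∑ P : Z, (if P ∈ A then (1:ℤ) else 0)) = A.card := by
        rw [Finset.sum_ite_mem, Finset.univ_inter]; simp
      rw [hmsum, h2, h3] at h1
      omega
    have hP₀A : P₀ ∈ A := (hmemA P₀).mpr hP₀
    have hcard4 : A.card = 4 := by
      have hpos : 1 ≤ A.card := Finset.card_pos.mpr ⟨P₀, hP₀A⟩
      omega
    -- the exceptional set is exactly A
    have hset : {P : Z | ¬ ∃ k : ℤ, r (some P) = (k : ℚ)} = (A : Set Z) := by
      ext P
      simp only [Set.mem_setOf_eq, Finset.coe_filter, Set.mem_setOf_eq, hA,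
        Finset.mem_univ, true_and]
      constructor
      · intro hni hev
        obtain ⟨k, hk⟩ := hev
        apply hni
        refine ⟨k, ?_⟩
        have h2 : (2 : ℚ) * r (some P) = 2 * k := by
          rw [hm P]; norm_cast; omega
        linarith
      · intro hodd ⟨k, hk⟩
        apply hodd
        have : (m P : ℚ) = 2 * k := by rw [← hm P, hk]
        have h4 : m P = 2 * k := by exact_mod_cast this
        rw [h4]; exact even_two_mul k
    have hni : ¬ (∀ x : Option Z, ∃ k : ℤ, r x = (k : ℚ)) := by
      intro hforall
      obtain ⟨k, hk⟩ := hforall (some P₀)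
      apply hP₀
      have : (m P₀ : ℚ) = 2 * k := by rw [← hm P₀, hk]
      have h4 : m P₀ = 2 * k := by exact_mod_cast this
      rw [h4]; exact even_two_mul k
    have := hwt r hr hni
    rw [hset, Set.ncard_coe_finset, hcard4] at this
    exact this (by simp)
end

section
/- Let Z be a finite set and let L be a subgroup of the ℚ-vector space with basis {e_P : P ∈ Z} ∪ {h} (bilinear form: e_P² = −2, h² = 2, all distinct basis vectors orthogonal) such that L contains all e_P and h, every element of L has the form (1/2)(Σ_{P∈Z} a_P e_P + b h) with all a_P, b ∈ ℤ, and no element of L has exactly one odd coefficient a_P together with odd b. Then there is no u ∈ L with u·u = 0 and u·h = 1. -/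
theorem stmt19 {Z : Type*} [Fintype Z] [DecidableEq Z]
    (L : AddSubgroup (Option Z → ℚ))
    (he : ∀ P : Z, eVec P ∈ L) (hh : hVec (Z := Z) ∈ L)
    (hhalf : ∀ v ∈ L, ∀ x : Option Z, ∃ m : ℤ, 2 * v x = (m : ℚ))
    (hwt : ∀ v ∈ L,
      ¬ (Set.ncard {P : Z | ¬ ∃ m : ℤ, v (some P) = (m : ℚ)} = 1 ∧
         ¬ ∃ m : ℤ, v none = (m : ℚ))) :
    ¬ ∃ u : Option Z → ℚ, u ∈ L ∧ bform u u = 0 ∧ bform u hVec = 1 := by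
  rintro ⟨u, huL, hu0, hu1⟩
  -- choose integers m x with 2 * u x = m x
  choose m hm using hhalf u huL
  -- u none = 1/2
  have hnone : 2 * u none = 1 := by
    simpa [bform, hVec] using hu1
  -- ∑ (m (some P))^2 = 1 in ℤ
  have hsum : ∑ P : Z, (m (some P))^2 = 1 := by
    have hq : ((∑ P : Z, (m (some P))^2 : ℤ) : ℚ) = 1 := by
      push_cast
      have : ∀ P : Z, ((m (some P) : ℚ))^2 = 4 * (u (some P) * u (some P)) := by
        intro P
        rw [← hm (some P)]; ring
      rw [Finset.sum_congr rfl fun P _ => this P, ← Finset.mul_sum]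
      have h2 : 2 * u none * u none - 2 * ∑ P : Z, u (some P) * u (some P) = 0 := hu0
      have h3 : 2 * u none = 1 := hnone
      nlinarith [h2, h3]
    exact_mod_cast hq
  -- exists P with m (some P) ≠ 0
  have hex : ∃ P : Z, m (some P) ≠ 0 := by
    by_contra h
    push_neg at h
    simp [h] at hsum
  obtain ⟨P, hP⟩ := hex
  have hP1 : (m (some P))^2 = 1 ∧ ∀ Q : Z, Q ≠ P → m (some Q) = 0 := by
    have hP2 : 1 ≤ (m (some P))^2 := by
      rcases lt_or_gt_of_ne hP with h | h <;> nlinarith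
    have hrest : ∑ Q ∈ Finset.univ.erase P, (m (some Q))^2 = 1 - (m (some P))^2 := by
      have key := Finset.add_sum_erase Finset.univ (fun Q => (m (some Q))^2) (Finset.mem_univ P)
      rw [hsum] at key
      linarith
    have hnn : 0 ≤ ∑ Q ∈ Finset.univ.erase P, (m (some Q))^2 :=
      Finset.sum_nonneg fun Q _ => sq_nonneg _
    have hrz : ∑ Q ∈ Finset.univ.erase P, (m (some Q))^2 = 0 := by omega
    constructor
    · omega
    · intro Q hQ
      have := (Finset.sum_eq_zero_iff_of_nonneg (fun Q _ => sq_nonneg (m (some Q)))).mp hrz Q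
        (Finset.mem_erase.mpr ⟨hQ, Finset.mem_univ Q⟩)
      nlinarith [this]
  obtain ⟨hPsq, hzero⟩ := hP1
  -- the bad set is {P}
  have hset : {Q : Z | ¬ ∃ k : ℤ, u (some Q) = (k : ℚ)} = {P} := by
    ext Q
    simp only [Set.mem_setOf_eq, Set.mem_singleton_iff]
    constructor
    · intro hQ
      by_contra hne
      exact hQ ⟨0, by
        have := hm (some Q)
        rw [hzero Q hne] at this
        push_cast at this ⊢
        linarith⟩
    · rintro rfl ⟨k, hk⟩
      have h2k : (m (some Q) : ℚ) = 2 * k := by rw [← hm (some Q), hk]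
      have hQ2 : m (some Q) = 2 * k := by exact_mod_cast h2k
      have h4 : 4 * k^2 = 1 := by rw [hQ2] at hPsq; ring_nf at hPsq ⊢; linarith
      have hdvd : (2:ℤ) ∣ 1 := ⟨2 * k^2, by linarith⟩
      norm_num at hdvd
  apply hwt u huL
  constructor
  · rw [hset]; exact Set.ncard_singleton P
  · rintro ⟨k, hk⟩
    rw [hk] at hnone
    have : (2 * k : ℚ) = 1 := hnone
    have : (2 * k : ℤ) = 1 := by exact_mod_cast this
    omega
end
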